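/- Let n ≥ 1, let Q : ℝⁿ → ℝⁿ and A : ℝⁿ → Mat_{n×n}(ℝ) be smooth. Suppose C and D are second-order Killing tensors of ℝⁿ, B, L : ℝⁿ → ℝⁿ are smooth vector fields, G : ℝⁿ → ℝ is smooth, s ∈ ℝ, and for all q and all indices: D_{ab} = −½(∂B_a/∂q^b + ∂B_b/∂q^a) − (C_{ca} A^c_b + C_{cb} A^c_a); ½(∂L_a/∂q^b + ∂L_b/∂q^a) = −(D_{ca} A^c_b + D_{cb} A^c_a); L_a Q^a = s; ∂(B_b Q^b)/∂q^a = 2 D_{ab} Q^b − L_b A^b_a; and ∂G/∂q^a = 2 C_{ab} Q^b − L_a − B_b A^b_a. Then along every solution q(t) of q̈^a = −Q^a(q) + A^a_b(q) q̇^b, the quantity I₁(t) = (t D_{ab} + C_{ab}) q̇^a q̇^b + t L_a q̇^a + B_a q̇^a + (t²/2) s + t B_a Q^a + G(q(t)) is constant in t. -/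

import Mathlib

/-- Spatial partial derivative `∂f/∂q^a` of a function `f : ℝⁿ → ℝ`. -/
noncomputable def dS {n : ℕ} (f : (Fin n → ℝ) → ℝ) (a : Fin n) (q : Fin n → ℝ) : ℝ :=
  deriv (fun s => f (Function.update q a s)) (q a)

/-- A second-order Killing tensor of the Euclidean space `ℝⁿ`: a smooth,
symmetric matrix-valued map `C_{ab}(q)` satisfying the Killing tensor equation
`C_{(ab,c)} = 0` (in Cartesian coordinates). -/
def IsKillingTensor {n : ℕ} (C : (Fin n → ℝ) → Fin n → Fin n → ℝ) : Prop :=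
  (∀ a b, ContDiff ℝ (⊤ : ℕ∞) (fun q => C q a b)) ∧
  (∀ q a b, C q a b = C q b a) ∧
  (∀ q, ∀ a b c : Fin n,
    dS (fun q => C q a b) c q + dS (fun q => C q b c) a q + dS (fun q => C q c a) b q = 0)

/-- The symmetrized Jacobian `L_{(a,b)} = ½(∂L_a/∂q^b + ∂L_b/∂q^a)` of a vector
field `L` on `ℝⁿ`. -/
noncomputable def SymJac {n : ℕ} (L : (Fin n → ℝ) → Fin n → ℝ)
    (q : Fin n → ℝ) (a b : Fin n) : ℝ :=
  (1 / 2) * (dS (fun q => L q a) b q + dS (fun q => L q b) a q)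

section Aux
open Finset


lemma dS_eq_fderiv {n : ℕ} (f : (Fin n → ℝ) → ℝ) (p : Fin n → ℝ)
    (hf : DifferentiableAt ℝ f p) (a : Fin n) :
    dS f a p = fderiv ℝ f p (Pi.single a 1) := by
  have h1 : HasFDerivAt f (fderiv ℝ f p) (Function.update p a (p a)) := by
    rw [Function.update_eq_self]; exact hf.hasFDerivAt
  have hu : HasDerivAt (fun s => f (Function.update p a s))
      (fderiv ℝ f p (Pi.single a 1)) (p a) :=
    h1.comp_hasDerivAt _ (hasDerivAt_update p a (p a))
  exact hu.deriv

lemma hasDerivAt_comp_q {n : ℕ} (f : (Fin n → ℝ) → ℝ) (hf : Differentiable ℝ f)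
    (q : ℝ → Fin n → ℝ) (hq : ∀ a, Differentiable ℝ (fun t => q t a)) (t : ℝ) :
    HasDerivAt (fun t => f (q t)) (∑ c, dS f c (q t) * deriv (fun u => q u c) t) t := by
  have hqd : HasDerivAt q (fun a => deriv (fun u => q u a) t) t :=
    hasDerivAt_pi.2 fun a => ((hq a) t).hasDerivAt
  have h := (hf (q t)).hasFDerivAt.comp_hasDerivAt t hqd
  have hrep : (fun a => deriv (fun u => q u a) t)
      = ∑ c : Fin n, deriv (fun u => q u c) t • (Pi.single c 1 : Fin n → ℝ) := by
    funext j
    simp [Finset.sum_apply, Pi.single_apply]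
  have h2 : (fderiv ℝ f (q t)) (fun a => deriv (fun u => q u a) t)
      = ∑ c, dS f c (q t) * deriv (fun u => q u c) t := by
    rw [hrep, map_sum]
    exact Finset.sum_congr rfl fun c _ => by
      rw [map_smul, dS_eq_fderiv f (q t) (hf (q t)) c, smul_eq_mul]; ring
  rw [← h2]
  exact h


section Helpers
variable {n : ℕ}

lemma swap2 (F : Fin n → Fin n → ℝ) : ∑ a, ∑ b, F a b = ∑ a, ∑ b, F b a :=
  Finset.sum_comm

lemma cyc3 (F : Fin n → Fin n → Fin n → ℝ) :
    (∑ a, ∑ b, ∑ c, F a b c) = ∑ a, ∑ b, ∑ c, F c a b := by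
  rw [Finset.sum_comm]
  exact Finset.sum_congr rfl fun b _ => Finset.sum_comm

lemma sum2_congr (f g : Fin n → Fin n → ℝ) (h : ∀ a b, f a b = g a b) :
    ∑ a, ∑ b, f a b = ∑ a, ∑ b, g a b :=
  Finset.sum_congr rfl fun a _ => Finset.sum_congr rfl fun b _ => h a b

lemma sum3_congr (f g : Fin n → Fin n → Fin n → ℝ) (h : ∀ a b c, f a b c = g a b c) :
    ∑ a, ∑ b, ∑ c, f a b c = ∑ a, ∑ b, ∑ c, g a b c :=
  Finset.sum_congr rfl fun a _ => Finset.sum_congr rfl fun b _ =>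
    Finset.sum_congr rfl fun c _ => h a b c

lemma pullc (c : ℝ) (F : Fin n → Fin n → ℝ) :
    (∑ a, ∑ b, c * F a b) = c * ∑ a, ∑ b, F a b := by
  rw [Finset.mul_sum]
  exact Finset.sum_congr rfl fun a _ => by rw [Finset.mul_sum]

end Helpers

lemma key {n : ℕ} (t s : ℝ)
    (v Qv Lv Bv dBQ dG : Fin n → ℝ)
    (Cm Dm Am dLv dBv : Fin n → Fin n → ℝ)
    (dC dD : Fin n → Fin n → Fin n → ℝ)
    (w : Fin n → ℝ)
    (hw : ∀ a, w a = -(Qv a) + ∑ b, Am a b * v b)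
    (symC : ∀ a b, Cm a b = Cm b a) (symD : ∀ a b, Dm a b = Dm b a)
    (killC : ∀ a b c, dC c a b + dC a b c + dC b c a = 0)
    (killD : ∀ a b c, dD c a b + dD a b c + dD b c a = 0)
    (H1 : ∀ a b, Dm a b = -((1/2) * (dBv a b + dBv b a))
        - ((∑ c, Cm c a * Am c b) + (∑ c, Cm c b * Am c a)))
    (H2 : ∀ a b, (1/2) * (dLv a b + dLv b a) =
        -((∑ c, Dm c a * Am c b) + (∑ c, Dm c b * Am c a)))
    (H3 : (∑ a, Lv a * Qv a) = s)
    (H4 : ∀ a, dBQ a = 2 * (∑ b, Dm a b * Qv b) - ∑ b, Lv b * Am b a)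
    (H5 : ∀ a, dG a = 2 * (∑ b, Cm a b * Qv b) - Lv a - ∑ b, Bv b * Am b a) :
    (∑ a, ∑ b, ((Dm a b + t * (∑ c, dD c a b * v c) + (∑ c, dC c a b * v c)) * v a * v b
        + (t * Dm a b + Cm a b) * (w a * v b + v a * w b)))
    + ((∑ a, Lv a * v a) + t * (∑ a, ((∑ c, dLv a c * v c) * v a + Lv a * w a)))
    + (∑ a, ((∑ c, dBv a c * v c) * v a + Bv a * w a))
    + (t * s)
    + ((∑ a, Bv a * Qv a) + t * (∑ c, dBQ c * v c))
    + (∑ c, dG c * v c) = 0 := by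
  -- cubic Killing terms vanish
  have cub : ∀ (dT : Fin n → Fin n → Fin n → ℝ),
      (∀ a b c, dT c a b + dT a b c + dT b c a = 0) →
      (∑ a, ∑ b, (∑ c, dT c a b * v c) * (v a * v b)) = 0 := by
    intro dT kill
    have e : ∀ a b, (∑ c, dT c a b * v c) * (v a * v b)
        = ∑ c, dT c a b * (v a * (v b * v c)) := by
      intro a b; rw [Finset.sum_mul]; exact Finset.sum_congr rfl fun c _ => by ring
    rw [sum2_congr _ _ e]
    have h2 : (∑ a, ∑ b, ∑ c, dT c a b * (v a * (v b * v c)))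
        = ∑ a, ∑ b, ∑ c, dT b c a * (v a * (v b * v c)) := by
      rw [cyc3 (fun a b c => dT c a b * (v a * (v b * v c)))]
      exact sum3_congr _ _ fun a b c => by ring
    have h1 : (∑ a, ∑ b, ∑ c, dT b c a * (v a * (v b * v c)))
        = ∑ a, ∑ b, ∑ c, dT a b c * (v a * (v b * v c)) := by
      rw [cyc3 (fun a b c => dT b c a * (v a * (v b * v c)))]
      exact sum3_congr _ _ fun a b c => by ring
    have hz : (∑ a, ∑ b, ∑ c, (dT c a b + dT a b c + dT b c a) * (v a * (v b * v c))) = 0 :=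
      Finset.sum_eq_zero fun a _ => Finset.sum_eq_zero fun b _ =>
        Finset.sum_eq_zero fun c _ => by rw [kill a b c, zero_mul]
    have hsplit : (∑ a, ∑ b, ∑ c, (dT c a b + dT a b c + dT b c a) * (v a * (v b * v c)))
        = (∑ a, ∑ b, ∑ c, dT c a b * (v a * (v b * v c)))
        + (∑ a, ∑ b, ∑ c, dT a b c * (v a * (v b * v c)))
        + (∑ a, ∑ b, ∑ c, dT b c a * (v a * (v b * v c))) := by
      simp only [add_mul, Finset.sum_add_distrib]
    linarith [hz, hsplit, h1, h2]
  -- symmetric (tD+C)(wv+vw) term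
  have hwT : ∀ (T : Fin n → Fin n → ℝ), (∀ a b, T a b = T b a) →
      (∑ a, ∑ b, T a b * (w a * v b + v a * w b))
        = 2 * ((∑ a, ∑ b, ∑ c, T a b * (Am a c * (v c * v b)))
            - (∑ a, ∑ b, T a b * (Qv a * v b))) := by
    intro T symT
    have step1 : (∑ a, ∑ b, T a b * (w a * v b + v a * w b))
        = ∑ a, ∑ b, (T a b * (w a * v b) + T a b * (v a * w b)) :=
      sum2_congr _ _ fun a b => by ring
    have step2 : (∑ a, ∑ b, T a b * (v a * w b)) = ∑ a, ∑ b, T a b * (w a * v b) := by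
      rw [swap2 (fun a b => T a b * (v a * w b))]
      exact sum2_congr _ _ fun a b => by rw [symT a b]; ring
    have step3 : (∑ a, ∑ b, T a b * (w a * v b))
        = (∑ a, ∑ b, ∑ c, T a b * (Am a c * (v c * v b))) - (∑ a, ∑ b, T a b * (Qv a * v b)) := by
      have e : ∀ a b, T a b * (w a * v b)
          = -(T a b * (Qv a * v b)) + ∑ c, T a b * (Am a c * (v c * v b)) := by
        intro a b
        rw [hw a, add_mul, neg_mul, Finset.sum_mul, mul_add, Finset.mul_sum]
        congr 1
        · ring
        · exact Finset.sum_congr rfl fun c _ => by ring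
      rw [sum2_congr _ _ e]
      simp only [Finset.sum_add_distrib, Finset.sum_neg_distrib]
      ring
    rw [step1]
    simp only [Finset.sum_add_distrib]
    rw [step2, step3]
    ring
  -- component T1
  have hT1 : (∑ a, ∑ b, ((Dm a b + t * (∑ c, dD c a b * v c) + (∑ c, dC c a b * v c)) * v a * v b
      + (t * Dm a b + Cm a b) * (w a * v b + v a * w b)))
      = (∑ a, ∑ b, Dm a b * (v a * v b))
        + t * (2 * ((∑ a, ∑ b, ∑ c, Dm a b * (Am a c * (v c * v b)))
            - (∑ a, ∑ b, Dm a b * (Qv a * v b))))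
        + 2 * ((∑ a, ∑ b, ∑ c, Cm a b * (Am a c * (v c * v b)))
            - (∑ a, ∑ b, Cm a b * (Qv a * v b))) := by
    have e : ∀ a b, ((Dm a b + t * (∑ c, dD c a b * v c) + (∑ c, dC c a b * v c)) * v a * v b
        + (t * Dm a b + Cm a b) * (w a * v b + v a * w b))
        = Dm a b * (v a * v b) + t * ((∑ c, dD c a b * v c) * (v a * v b))
          + (∑ c, dC c a b * v c) * (v a * v b)
          + (t * (Dm a b * (w a * v b + v a * w b)) + Cm a b * (w a * v b + v a * w b)) := by
      intro a b; ring
    rw [sum2_congr _ _ e]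
    simp only [Finset.sum_add_distrib]
    rw [pullc t (fun a b => (∑ c, dD c a b * v c) * (v a * v b)),
      pullc t (fun a b => Dm a b * (w a * v b + v a * w b)),
      cub dD killD, cub dC killC, hwT Dm symD, hwT Cm symC]
    ring
  -- the symmetrized-gradient sums coming from H1/H2
  have hgrad : ∀ (dX : Fin n → Fin n → ℝ) (Tm : Fin n → Fin n → ℝ),
      (∀ a b, (1/2) * (dX a b + dX b a) =
        -((∑ c, Tm c a * Am c b) + (∑ c, Tm c b * Am c a))) →
      (∑ a, (∑ c, dX a c * v c) * v a)
        = -(2 * (∑ a, ∑ b, ∑ c, Tm a b * (Am a c * (v c * v b)))) := by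
    intro dX Tm HX
    have e : ∀ a, (∑ c, dX a c * v c) * v a = ∑ c, dX a c * (v a * v c) := by
      intro a; rw [Finset.sum_mul]; exact Finset.sum_congr rfl fun c _ => by ring
    rw [Finset.sum_congr rfl fun a _ => e a]
    have sym : (∑ a, ∑ b, dX a b * (v a * v b)) = ∑ a, ∑ b, dX b a * (v a * v b) := by
      rw [swap2 (fun a b => dX a b * (v a * v b))]
      exact sum2_congr _ _ fun a b => by ring
    have half : (∑ a, ∑ b, dX a b * (v a * v b))
        = ∑ a, ∑ b, (1/2) * (dX a b + dX b a) * (v a * v b) := by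
      have e2 : ∀ a b, (1/2) * (dX a b + dX b a) * (v a * v b)
          = (1/2) * (dX a b * (v a * v b)) + (1/2) * (dX b a * (v a * v b)) := by
        intro a b; ring
      rw [sum2_congr _ _ e2]
      simp only [Finset.sum_add_distrib]
      rw [pullc (1/2) (fun a b => dX a b * (v a * v b)),
        pullc (1/2) (fun a b => dX b a * (v a * v b))]
      linarith [sym]
    rw [half, sum2_congr _ _ (fun a b => by rw [HX a b])]
    have split : ∀ a b, -((∑ c, Tm c a * Am c b) + (∑ c, Tm c b * Am c a)) * (v a * v b)
        = -(∑ c, Tm c a * (Am c b * (v a * v b))) + -(∑ c, Tm c b * (Am c a * (v a * v b))) := by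
      intro a b
      have h1 : (∑ c, Tm c a * Am c b) * (v a * v b) = ∑ c, Tm c a * (Am c b * (v a * v b)) := by
        rw [Finset.sum_mul]; exact Finset.sum_congr rfl fun c _ => by ring
      have h2 : (∑ c, Tm c b * Am c a) * (v a * v b) = ∑ c, Tm c b * (Am c a * (v a * v b)) := by
        rw [Finset.sum_mul]; exact Finset.sum_congr rfl fun c _ => by ring
      rw [neg_mul, add_mul, h1, h2]; ring
    rw [sum2_congr _ _ split]
    simp only [Finset.sum_add_distrib, Finset.sum_neg_distrib]
    have r1 : (∑ a, ∑ b, ∑ c, Tm c a * (Am c b * (v a * v b)))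
        = ∑ a, ∑ b, ∑ c, Tm a b * (Am a c * (v c * v b)) := by
      rw [cyc3 (fun a b c => Tm a b * (Am a c * (v c * v b)))]
      exact sum3_congr _ _ fun a b c => by ring
    have r2 : (∑ a, ∑ b, ∑ c, Tm c b * (Am c a * (v a * v b)))
        = ∑ a, ∑ b, ∑ c, Tm c a * (Am c b * (v a * v b)) := by
      rw [swap2 (fun a b => ∑ c, Tm c b * (Am c a * (v a * v b)))]
      exact sum2_congr _ _ fun a b => Finset.sum_congr rfl fun c _ => by ring
    rw [r2, r1]
    ring
  have hH2s := hgrad dLv Dm H2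
  have hH1s : (∑ a, (∑ c, dBv a c * v c) * v a)
      = -((∑ a, ∑ b, Dm a b * (v a * v b)))
        - 2 * (∑ a, ∑ b, ∑ c, Cm a b * (Am a c * (v c * v b))) := by
    have H1' : ∀ a b, (1/2) * (dBv a b + dBv b a)
        = -(Dm a b) - ((∑ c, Cm c a * Am c b) + (∑ c, Cm c b * Am c a)) := by
      intro a b; have := H1 a b; linarith
    -- mimic hgrad but with the extra -Dm term
    have e : ∀ a, (∑ c, dBv a c * v c) * v a = ∑ c, dBv a c * (v a * v c) := by
      intro a; rw [Finset.sum_mul]; exact Finset.sum_congr rfl fun c _ => by ring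
    rw [Finset.sum_congr rfl fun a _ => e a]
    have sym : (∑ a, ∑ b, dBv a b * (v a * v b)) = ∑ a, ∑ b, dBv b a * (v a * v b) := by
      rw [swap2 (fun a b => dBv a b * (v a * v b))]
      exact sum2_congr _ _ fun a b => by ring
    have half : (∑ a, ∑ b, dBv a b * (v a * v b))
        = ∑ a, ∑ b, (1/2) * (dBv a b + dBv b a) * (v a * v b) := by
      have e2 : ∀ a b, (1/2) * (dBv a b + dBv b a) * (v a * v b)
          = (1/2) * (dBv a b * (v a * v b)) + (1/2) * (dBv b a * (v a * v b)) := by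
        intro a b; ring
      rw [sum2_congr _ _ e2]
      simp only [Finset.sum_add_distrib]
      rw [pullc (1/2) (fun a b => dBv a b * (v a * v b)),
        pullc (1/2) (fun a b => dBv b a * (v a * v b))]
      linarith [sym]
    rw [half, sum2_congr _ _ (fun a b => by rw [H1' a b])]
    have split : ∀ a b, (-(Dm a b) - ((∑ c, Cm c a * Am c b) + (∑ c, Cm c b * Am c a))) * (v a * v b)
        = -(Dm a b * (v a * v b)) + (-(∑ c, Cm c a * (Am c b * (v a * v b)))
            + -(∑ c, Cm c b * (Am c a * (v a * v b)))) := by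
      intro a b
      have h1 : (∑ c, Cm c a * Am c b) * (v a * v b) = ∑ c, Cm c a * (Am c b * (v a * v b)) := by
        rw [Finset.sum_mul]; exact Finset.sum_congr rfl fun c _ => by ring
      have h2 : (∑ c, Cm c b * Am c a) * (v a * v b) = ∑ c, Cm c b * (Am c a * (v a * v b)) := by
        rw [Finset.sum_mul]; exact Finset.sum_congr rfl fun c _ => by ring
      rw [sub_mul, add_mul, h1, h2]; ring
    rw [sum2_congr _ _ split]
    simp only [Finset.sum_add_distrib, Finset.sum_neg_distrib]
    have r1 : (∑ a, ∑ b, ∑ c, Cm c a * (Am c b * (v a * v b)))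
        = ∑ a, ∑ b, ∑ c, Cm a b * (Am a c * (v c * v b)) := by
      rw [cyc3 (fun a b c => Cm a b * (Am a c * (v c * v b)))]
      exact sum3_congr _ _ fun a b c => by ring
    have r2 : (∑ a, ∑ b, ∑ c, Cm c b * (Am c a * (v a * v b)))
        = ∑ a, ∑ b, ∑ c, Cm c a * (Am c b * (v a * v b)) := by
      rw [swap2 (fun a b => ∑ c, Cm c b * (Am c a * (v a * v b)))]
      exact sum2_congr _ _ fun a b => Finset.sum_congr rfl fun c _ => by ring
    rw [r2, r1]
    ring
  -- L·w and B·w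
  have hXw : ∀ (X : Fin n → ℝ), (∑ a, X a * w a)
      = -(∑ a, X a * Qv a) + ∑ a, ∑ b, X a * (Am a b * v b) := by
    intro X
    have e : ∀ a, X a * w a = -(X a * Qv a) + ∑ b, X a * (Am a b * v b) := by
      intro a
      rw [hw a, mul_add, Finset.mul_sum]
      ring
    rw [Finset.sum_congr rfl fun a _ => e a]
    simp only [Finset.sum_add_distrib, Finset.sum_neg_distrib]
  -- H4 summed
  have hH4s : (∑ c, dBQ c * v c)
      = 2 * (∑ a, ∑ b, Dm a b * (Qv a * v b)) - ∑ a, ∑ b, Lv a * (Am a b * v b) := by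
    have e : ∀ a, dBQ a * v a
        = 2 * (∑ b, Dm a b * (Qv b * v a)) - ∑ b, Lv b * (Am b a * v a) := by
      intro a
      have h1 : (∑ b, Dm a b * Qv b) * v a = ∑ b, Dm a b * (Qv b * v a) := by
        rw [Finset.sum_mul]; exact Finset.sum_congr rfl fun b _ => by ring
      have h2 : (∑ b, Lv b * Am b a) * v a = ∑ b, Lv b * (Am b a * v a) := by
        rw [Finset.sum_mul]; exact Finset.sum_congr rfl fun b _ => by ring
      rw [H4 a, sub_mul, mul_assoc, h1, h2]
    rw [Finset.sum_congr rfl fun a _ => e a]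
    simp only [Finset.sum_sub_distrib]
    rw [← Finset.mul_sum]
    have r1 : (∑ a, ∑ b, Dm a b * (Qv b * v a)) = ∑ a, ∑ b, Dm a b * (Qv a * v b) := by
      rw [swap2 (fun a b => Dm a b * (Qv b * v a))]
      exact sum2_congr _ _ fun a b => by rw [symD a b]
    have r2 : (∑ a, ∑ b, Lv b * (Am b a * v a)) = ∑ a, ∑ b, Lv a * (Am a b * v b) :=
      swap2 (fun a b => Lv b * (Am b a * v a))
    rw [r1, r2]
  -- H5 summed
  have hH5s : (∑ c, dG c * v c)
      = 2 * (∑ a, ∑ b, Cm a b * (Qv a * v b)) - (∑ a, Lv a * v a)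
        - ∑ a, ∑ b, Bv a * (Am a b * v b) := by
    have e : ∀ a, dG a * v a
        = 2 * (∑ b, Cm a b * (Qv b * v a)) - Lv a * v a - ∑ b, Bv b * (Am b a * v a) := by
      intro a
      have h1 : (∑ b, Cm a b * Qv b) * v a = ∑ b, Cm a b * (Qv b * v a) := by
        rw [Finset.sum_mul]; exact Finset.sum_congr rfl fun b _ => by ring
      have h2 : (∑ b, Bv b * Am b a) * v a = ∑ b, Bv b * (Am b a * v a) := by
        rw [Finset.sum_mul]; exact Finset.sum_congr rfl fun b _ => by ring
      rw [H5 a, sub_mul, sub_mul, mul_assoc, h1, h2]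
    rw [Finset.sum_congr rfl fun a _ => e a]
    simp only [Finset.sum_sub_distrib]
    rw [← Finset.mul_sum]
    have r1 : (∑ a, ∑ b, Cm a b * (Qv b * v a)) = ∑ a, ∑ b, Cm a b * (Qv a * v b) := by
      rw [swap2 (fun a b => Cm a b * (Qv b * v a))]
      exact sum2_congr _ _ fun a b => by rw [symC a b]
    have r2 : (∑ a, ∑ b, Bv b * (Am b a * v a)) = ∑ a, ∑ b, Bv a * (Am a b * v b) :=
      swap2 (fun a b => Bv b * (Am b a * v a))
    rw [r1, r2]
  -- assemble
  have hT2 : (∑ a, ((∑ c, dLv a c * v c) * v a + Lv a * w a))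
      = (∑ a, (∑ c, dLv a c * v c) * v a) + (∑ a, Lv a * w a) := by
    simp only [Finset.sum_add_distrib]
  have hT3 : (∑ a, ((∑ c, dBv a c * v c) * v a + Bv a * w a))
      = (∑ a, (∑ c, dBv a c * v c) * v a) + (∑ a, Bv a * w a) := by
    simp only [Finset.sum_add_distrib]
  rw [hT1, hT2, hT3, hH2s, hH1s, hXw Lv, hXw Bv, hH4s, hH5s, H3]
  ring

end Aux

/-- The polynomial quadratic first integral `I₁` (case `n = 1` of Integral 1 of
Theorem 2): under the stated geometric conditions the quantity
`I₁ = (t D_{ab} + C_{ab}) q̇^a q̇^b + t L_a q̇^a + B_a q̇^a + (t²/2) s + t B_a Q^a + G`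
is conserved along every solution of `q̈^a = −Q^a(q) + A^a_b(q) q̇^b`. -/

theorem linear_in_time_quadratic_first_integral
    (n : ℕ) (hn : 1 ≤ n)
    (Q : (Fin n → ℝ) → Fin n → ℝ) (A : (Fin n → ℝ) → Fin n → Fin n → ℝ)
    (hQ : ContDiff ℝ (⊤ : ℕ∞) Q) (hA : ∀ a b, ContDiff ℝ (⊤ : ℕ∞) (fun q => A q a b))
    (C D : (Fin n → ℝ) → Fin n → Fin n → ℝ)
    (hC : IsKillingTensor C) (hD : IsKillingTensor D)
    (B L : (Fin n → ℝ) → Fin n → ℝ)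
    (hBsm : ContDiff ℝ (⊤ : ℕ∞) B) (hLsm : ContDiff ℝ (⊤ : ℕ∞) L)
    (G : (Fin n → ℝ) → ℝ) (hGsm : ContDiff ℝ (⊤ : ℕ∞) G)
    (s : ℝ)
    -- `D_{ab} = −½(∂B_a/∂q^b + ∂B_b/∂q^a) − (C_{ca} A^c_b + C_{cb} A^c_a)`
    (h1 : ∀ q, ∀ a b : Fin n, D q a b =
      -((1 / 2) * (dS (fun q => B q a) b q + dS (fun q => B q b) a q))
        - ((∑ c, C q c a * A q c b) + (∑ c, C q c b * A q c a)))
    -- `½(∂L_a/∂q^b + ∂L_b/∂q^a) = −(D_{ca} A^c_b + D_{cb} A^c_a)`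
    (h2 : ∀ q, ∀ a b : Fin n,
      (1 / 2) * (dS (fun q => L q a) b q + dS (fun q => L q b) a q) =
        -((∑ c, D q c a * A q c b) + (∑ c, D q c b * A q c a)))
    -- `L_a Q^a = s`
    (h3 : ∀ q, (∑ a, L q a * Q q a) = s)
    -- `(B_b Q^b)_{,a} = 2 D_{ab} Q^b − L_b A^b_a`
    (h4 : ∀ q, ∀ a : Fin n, dS (fun q => ∑ b, B q b * Q q b) a q =
      2 * (∑ b, D q a b * Q q b) - ∑ b, L q b * A q b a)
    -- `G_{,a} = 2 C_{ab} Q^b − L_a − B_b A^b_a`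
    (h5 : ∀ q, ∀ a : Fin n, dS G a q =
      2 * (∑ b, C q a b * Q q b) - L q a - ∑ b, B q b * A q b a)
    -- a solution of the dynamical equations
    (q : ℝ → Fin n → ℝ) (hq : ContDiff ℝ (⊤ : ℕ∞) q)
    (hode : ∀ t, ∀ a : Fin n, deriv (fun s => deriv (fun u => q u a) s) t
      = -(Q (q t) a) + ∑ k, A (q t) a k * deriv (fun u => q u k) t) :
    -- `I₁` is constant in `t`
    ∃ cst : ℝ, ∀ t : ℝ,
      (∑ a, ∑ b, (t * D (q t) a b + C (q t) a b)
          * deriv (fun u => q u a) t * deriv (fun u => q u b) t)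
        + t * (∑ a, L (q t) a * deriv (fun u => q u a) t)
        + (∑ a, B (q t) a * deriv (fun u => q u a) t)
        + (t ^ 2 / 2) * s
        + t * (∑ a, B (q t) a * Q (q t) a)
        + G (q t)
      = cst := by
  classical
  have hqa : ∀ a, Differentiable ℝ (fun t => q t a) :=
    fun a => (contDiff_pi.1 hq a).differentiable (by simp)
  have hdiffC : ∀ a b, Differentiable ℝ (fun x => C x a b) :=
    fun a b => (hC.1 a b).differentiable (by simp)
  have hdiffD : ∀ a b, Differentiable ℝ (fun x => D x a b) :=
    fun a b => (hD.1 a b).differentiable (by simp)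
  have hdiffL : ∀ a, Differentiable ℝ (fun x => L x a) :=
    fun a => (contDiff_pi.1 hLsm a).differentiable (by simp)
  have hdiffB : ∀ a, Differentiable ℝ (fun x => B x a) :=
    fun a => (contDiff_pi.1 hBsm a).differentiable (by simp)
  have hdiffG : Differentiable ℝ G := hGsm.differentiable (by simp)
  have hdiffBQ : Differentiable ℝ (fun x => ∑ b, B x b * Q x b) := by
    have : ContDiff ℝ (⊤ : ℕ∞) (fun x => ∑ b, B x b * Q x b) :=
      ContDiff.sum fun b _ => (contDiff_pi.1 hBsm b).mul (contDiff_pi.1 hQ b)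
    exact this.differentiable (by simp)
  have hva : ∀ t a, HasDerivAt (fun s => deriv (fun u => q u a) s)
      (-(Q (q t) a) + ∑ k, A (q t) a k * deriv (fun u => q u k) t) t := by
    intro t a
    have hd : Differentiable ℝ (deriv (fun u => q u a)) := by
      have h2 : ContDiff ℝ (↑(⊤ : ℕ∞)) (fun t => q t a) := (contDiff_pi.1 hq a).of_le (by simp)
      exact ((contDiff_infty_iff_deriv.1 h2).2).differentiable (by simp)
    have h := (hd t).hasDerivAt
    rwa [hode t a] at h
  have main : ∀ t : ℝ, HasDerivAt (fun t =>
      (∑ a, ∑ b, (t * D (q t) a b + C (q t) a b)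
          * deriv (fun u => q u a) t * deriv (fun u => q u b) t)
        + t * (∑ a, L (q t) a * deriv (fun u => q u a) t)
        + (∑ a, B (q t) a * deriv (fun u => q u a) t)
        + (t ^ 2 / 2) * s
        + t * (∑ a, B (q t) a * Q (q t) a)
        + G (q t)) (0 : ℝ) t := by
    intro t
    have hCq : ∀ a b, HasDerivAt (fun t => C (q t) a b)
        (∑ c, dS (fun x => C x a b) c (q t) * deriv (fun u => q u c) t) t :=
      fun a b => hasDerivAt_comp_q _ (hdiffC a b) q hqa t
    have hDq : ∀ a b, HasDerivAt (fun t => D (q t) a b)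
        (∑ c, dS (fun x => D x a b) c (q t) * deriv (fun u => q u c) t) t :=
      fun a b => hasDerivAt_comp_q _ (hdiffD a b) q hqa t
    have hLq : ∀ a, HasDerivAt (fun t => L (q t) a)
        (∑ c, dS (fun x => L x a) c (q t) * deriv (fun u => q u c) t) t :=
      fun a => hasDerivAt_comp_q _ (hdiffL a) q hqa t
    have hBq : ∀ a, HasDerivAt (fun t => B (q t) a)
        (∑ c, dS (fun x => B x a) c (q t) * deriv (fun u => q u c) t) t :=
      fun a => hasDerivAt_comp_q _ (hdiffB a) q hqa t
    have hBQq : HasDerivAt (fun t => ∑ b, B (q t) b * Q (q t) b)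
        (∑ c, dS (fun x => ∑ b, B x b * Q x b) c (q t) * deriv (fun u => q u c) t) t :=
      hasDerivAt_comp_q _ hdiffBQ q hqa t
    have hGq : HasDerivAt (fun t => G (q t))
        (∑ c, dS G c (q t) * deriv (fun u => q u c) t) t :=
      hasDerivAt_comp_q _ hdiffG q hqa t
    have hE1 : HasDerivAt (fun t => ∑ a, ∑ b, (t * D (q t) a b + C (q t) a b)
        * deriv (fun u => q u a) t * deriv (fun u => q u b) t)
        (∑ a, ∑ b, ((D (q t) a b + t * (∑ c, dS (fun x => D x a b) c (q t) * deriv (fun u => q u c) t) + (∑ c, dS (fun x => C x a b) c (q t) * deriv (fun u => q u c) t)) * deriv (fun u => q u a) t * deriv (fun u => q u b) t + (t * D (q t) a b + C (q t) a b) * ((-(Q (q t) a) + ∑ k, A (q t) a k * deriv (fun u => q u k) t) * deriv (fun u => q u b) t + deriv (fun u => q u a) t * (-(Q (q t) b) + ∑ k, A (q t) b k * deriv (fun u => q u k) t)))) t := by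
      have inner : ∀ a b, HasDerivAt (fun t => (t * D (q t) a b + C (q t) a b)
          * deriv (fun u => q u a) t * deriv (fun u => q u b) t)
          ((D (q t) a b + t * (∑ c, dS (fun x => D x a b) c (q t) * deriv (fun u => q u c) t) + (∑ c, dS (fun x => C x a b) c (q t) * deriv (fun u => q u c) t)) * deriv (fun u => q u a) t * deriv (fun u => q u b) t + (t * D (q t) a b + C (q t) a b) * ((-(Q (q t) a) + ∑ k, A (q t) a k * deriv (fun u => q u k) t) * deriv (fun u => q u b) t + deriv (fun u => q u a) t * (-(Q (q t) b) + ∑ k, A (q t) b k * deriv (fun u => q u k) t))) t := by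
        intro a b
        exact (((((hasDerivAt_id t).fun_mul (hDq a b)).fun_add (hCq a b)).fun_mul (hva t a)).fun_mul
          (hva t b)).congr_deriv (by simp only [id_eq]; ring)
      exact HasDerivAt.fun_sum fun a _ => HasDerivAt.fun_sum fun b _ => inner a b
    have hE2 : HasDerivAt (fun t => t * (∑ a, L (q t) a * deriv (fun u => q u a) t))
        ((∑ a, L (q t) a * deriv (fun u => q u a) t) + t * (∑ a, ((∑ c, dS (fun x => L x a) c (q t) * deriv (fun u => q u c) t) * deriv (fun u => q u a) t + L (q t) a * (-(Q (q t) a) + ∑ k, A (q t) a k * deriv (fun u => q u k) t)))) t := by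
      have hin : HasDerivAt (fun t => ∑ a, L (q t) a * deriv (fun u => q u a) t)
          (∑ a, ((∑ c, dS (fun x => L x a) c (q t) * deriv (fun u => q u c) t) * deriv (fun u => q u a) t
            + L (q t) a * (-(Q (q t) a) + ∑ k, A (q t) a k * deriv (fun u => q u k) t))) t :=
        HasDerivAt.fun_sum fun a _ => (hLq a).fun_mul (hva t a)
      exact ((hasDerivAt_id t).mul hin).congr_deriv (by simp only [id_eq]; ring)
    have hE3 : HasDerivAt (fun t => ∑ a, B (q t) a * deriv (fun u => q u a) t)
        (∑ a, ((∑ c, dS (fun x => B x a) c (q t) * deriv (fun u => q u c) t) * deriv (fun u => q u a) t + B (q t) a * (-(Q (q t) a) + ∑ k, A (q t) a k * deriv (fun u => q u k) t))) t :=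
      HasDerivAt.fun_sum fun a _ => (hBq a).fun_mul (hva t a)
    have hE4 : HasDerivAt (fun t => (t ^ 2 / 2) * s) (t * s) t :=
      (((hasDerivAt_pow 2 t).div_const 2).mul_const s).congr_deriv (by ring)
    have hE5 : HasDerivAt (fun t => t * (∑ a, B (q t) a * Q (q t) a))
        ((∑ a, B (q t) a * Q (q t) a) + t * (∑ c, dS (fun x => ∑ b, B x b * Q x b) c (q t) * deriv (fun u => q u c) t)) t :=
      ((hasDerivAt_id t).mul hBQq).congr_deriv (by simp only [id_eq]; ring)
    have hE6 : HasDerivAt (fun t => G (q t)) (∑ c, dS G c (q t) * deriv (fun u => q u c) t) t := hGq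
    have htot := ((((hE1.add hE2).add hE3).add hE4).add hE5).add hE6
    have hzero : (∑ a, ∑ b, ((D (q t) a b + t * (∑ c, dS (fun x => D x a b) c (q t) * deriv (fun u => q u c) t) + (∑ c, dS (fun x => C x a b) c (q t) * deriv (fun u => q u c) t)) * deriv (fun u => q u a) t * deriv (fun u => q u b) t + (t * D (q t) a b + C (q t) a b) * ((-(Q (q t) a) + ∑ k, A (q t) a k * deriv (fun u => q u k) t) * deriv (fun u => q u b) t + deriv (fun u => q u a) t * (-(Q (q t) b) + ∑ k, A (q t) b k * deriv (fun u => q u k) t))))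
      + ((∑ a, L (q t) a * deriv (fun u => q u a) t) + t * (∑ a, ((∑ c, dS (fun x => L x a) c (q t) * deriv (fun u => q u c) t) * deriv (fun u => q u a) t + L (q t) a * (-(Q (q t) a) + ∑ k, A (q t) a k * deriv (fun u => q u k) t))))
      + (∑ a, ((∑ c, dS (fun x => B x a) c (q t) * deriv (fun u => q u c) t) * deriv (fun u => q u a) t + B (q t) a * (-(Q (q t) a) + ∑ k, A (q t) a k * deriv (fun u => q u k) t)))
      + (t * s)
      + ((∑ a, B (q t) a * Q (q t) a) + t * (∑ c, dS (fun x => ∑ b, B x b * Q x b) c (q t) * deriv (fun u => q u c) t))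
      + (∑ c, dS G c (q t) * deriv (fun u => q u c) t) = 0 :=
      key t s (fun a => deriv (fun u => q u a) t) (Q (q t)) (L (q t)) (B (q t))
        (fun c => dS (fun x => ∑ b, B x b * Q x b) c (q t)) (fun c => dS G c (q t))
        (C (q t)) (D (q t)) (A (q t))
        (fun a c => dS (fun x => L x a) c (q t)) (fun a c => dS (fun x => B x a) c (q t))
        (fun c a b => dS (fun x => C x a b) c (q t)) (fun c a b => dS (fun x => D x a b) c (q t))
        (fun a => -(Q (q t) a) + ∑ k, A (q t) a k * deriv (fun u => q u k) t)
        (fun a => rfl)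
        (fun a b => hC.2.1 (q t) a b) (fun a b => hD.2.1 (q t) a b)
        (fun a b c => hC.2.2 (q t) a b c) (fun a b c => hD.2.2 (q t) a b c)
        (h1 (q t)) (h2 (q t)) (h3 (q t)) (h4 (q t)) (h5 (q t))
    rw [hzero] at htot
    exact htot
  refine ⟨(fun t : ℝ =>
      (∑ a, ∑ b, (t * D (q t) a b + C (q t) a b)
          * deriv (fun u => q u a) t * deriv (fun u => q u b) t)
        + t * (∑ a, L (q t) a * deriv (fun u => q u a) t)
        + (∑ a, B (q t) a * deriv (fun u => q u a) t)
        + (t ^ 2 / 2) * s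
        + t * (∑ a, B (q t) a * Q (q t) a)
        + G (q t)) 0, fun t => ?_⟩
  exact is_const_of_deriv_eq_zero (fun x => (main x).differentiableAt)
    (fun x => (main x).deriv) t 0
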